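/- arXiv:1811.00507 — 2 statements merged into one kernel-verified Lean document; each statement's English description precedes it below -/
import Mathlib

section
/- There is an absolute constant c₀ > 0 with the following property. Let R > 0, δ ≥ 0 with δ·R ≤ c₀, and let φ : ℝ² → ℝ be twice continuously differentiable with φ(0,0) = 0, ∇φ(0,0) = 0, and ‖D²φ(y')‖ ≤ δ for all y' ∈ ℝ² with |y'| ≤ 2R. Define the flattening map ψ : ℝ³ → ℝ³ by ψ(x₁,x₂,x₃) = (x₁, x₂, x₃ − φ(x₁,x₂)). Then B⁺(R) ⊆ ψ( { x ∈ ℝ³ : |x| < 3R/2 and x₃ > φ(x₁,x₂) } ) ⊆ B⁺(2R), where B⁺(ρ) := { x ∈ ℝ³ : |x| < ρ and x₃ > 0 }. -/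
open Set Metric

noncomputable section

/-- Points of `ℝ³` with the Euclidean norm. -/
abbrev E3 := EuclideanSpace ℝ (Fin 3)

/-- Points of `ℝ²` with the Euclidean norm. -/
abbrev E2 := EuclideanSpace ℝ (Fin 2)

/-- Projection onto the first two coordinates, `x ↦ x' = (x₁, x₂)`. -/
def proj2 (x : E3) : E2 := WithLp.toLp 2 (fun i : Fin 2 => x i.castSucc : Fin 2 → ℝ)

/-- The open upper half-ball `B⁺(ρ) = { x : |x| < ρ, x₃ > 0 }`. -/
def halfBall (ρ : ℝ) : Set E3 := {x | ‖x‖ < ρ ∧ x 2 > 0}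

/-- The flattening map `ψ(x₁,x₂,x₃) = (x₁, x₂, x₃ − φ(x₁,x₂))`. -/
def flatten (φ : E2 → ℝ) : E3 → E3 :=
  fun x => WithLp.toLp 2 (fun i : Fin 3 => if i = 2 then x 2 - φ (proj2 x) else x i : Fin 3 → ℝ)

/-! The bound on `D²φ` makes `φ` small on the ball: `|∇φ(z)| ≤ δ|z|`, hence
`|φ(y')| ≤ δ (2R)² = 4δR² ≤ R/2` when `δR ≤ 1/8`. Since `ψ` only moves a point vertically,
by `|φ(x')|`, it moves it by at most `R/2`; `ψ` is inverted by `y ↦ y + φ(y') e₃`, so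
`B⁺(R)` is covered by the image of `{|x| < R + R/2}`, and that image lies in `{|y| < 3R/2 + R/2}`. -/

section SecondDerivativeBound

variable {E F : Type*} [NormedAddCommGroup E] [NormedSpace ℝ E]
  [NormedAddCommGroup F] [NormedSpace ℝ F] {f : E → F} {δ r : ℝ}

theorem norm_fderiv_fderiv_eq_norm_iteratedFDeriv_two (f : E → F) (y : E) :
    ‖fderiv ℝ (fderiv ℝ f) y‖ = ‖iteratedFDeriv ℝ 2 f y‖ := by
  rw [← norm_iteratedFDeriv_one, norm_iteratedFDeriv_fderiv]

theorem norm_fderiv_le_of_norm_iteratedFDeriv_two_le (hf : ContDiff ℝ 2 f)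
    (hf' : fderiv ℝ f 0 = 0) (hD2 : ∀ y ∈ closedBall (0 : E) r, ‖iteratedFDeriv ℝ 2 f y‖ ≤ δ)
    {z : E} (hz : z ∈ closedBall 0 r) : ‖fderiv ℝ f z‖ ≤ δ * ‖z‖ := by
  have hr : 0 ≤ r := nonneg_of_mem_closedBall hz
  have hf'diff : Differentiable ℝ (fderiv ℝ f) :=
    (hf.fderiv_right (m := 1) le_rfl).differentiable one_ne_zero
  simpa [hf'] using (convex_closedBall (0 : E) r).norm_image_sub_le_of_norm_fderiv_le
    (fun w _ => hf'diff w)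
    (fun w hw => (norm_fderiv_fderiv_eq_norm_iteratedFDeriv_two f w).trans_le (hD2 w hw))
    (mem_closedBall_self hr) hz

theorem norm_le_of_norm_iteratedFDeriv_two_le (hf : ContDiff ℝ 2 f) (hf0 : f 0 = 0)
    (hf' : fderiv ℝ f 0 = 0) (hD2 : ∀ y ∈ closedBall (0 : E) r, ‖iteratedFDeriv ℝ 2 f y‖ ≤ δ)
    {z : E} (hz : z ∈ closedBall 0 r) : ‖f z‖ ≤ δ * r * ‖z‖ := by
  have hr : 0 ≤ r := nonneg_of_mem_closedBall hz
  have hδ : 0 ≤ δ := (norm_nonneg _).trans (hD2 z hz)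
  have hgrad : ∀ w ∈ closedBall (0 : E) r, ‖fderiv ℝ f w‖ ≤ δ * r := fun w hw =>
    (norm_fderiv_le_of_norm_iteratedFDeriv_two_le hf hf' hD2 hw).trans
      (mul_le_mul_of_nonneg_left (mem_closedBall_zero_iff.mp hw) hδ)
  simpa [hf0] using (convex_closedBall (0 : E) r).norm_image_sub_le_of_norm_fderiv_le
    (fun w _ => hf.differentiable two_ne_zero w) hgrad (mem_closedBall_self hr) hz

end SecondDerivativeBound

theorem norm_proj2_le (x : E3) : ‖proj2 x‖ ≤ ‖x‖ := by
  rw [EuclideanSpace.norm_eq, EuclideanSpace.norm_eq]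
  apply Real.sqrt_le_sqrt
  rw [Fin.sum_univ_castSucc (n := 2)]
  have hproj : ∀ i : Fin 2, ‖proj2 x i‖ ^ 2 = ‖x i.castSucc‖ ^ 2 := fun i => rfl
  simp only [hproj]
  linarith [sq_nonneg ‖x (Fin.last 2)‖]

abbrev e₃ : E3 := EuclideanSpace.single 2 1

theorem flatten_eq (φ : E2 → ℝ) (x : E3) : flatten φ x = x - φ (proj2 x) • e₃ := by
  ext i
  by_cases h : i = 2
  · subst h; simp [flatten]
  · simp [flatten, h]

theorem flatten_apply_two (φ : E2 → ℝ) (x : E3) : flatten φ x 2 = x 2 - φ (proj2 x) := by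
  simp [flatten]

theorem proj2_add_smul_e₃ (x : E3) (c : ℝ) : proj2 (x + c • e₃) = proj2 x := by
  ext i
  have hi : i.castSucc ≠ (2 : Fin 3) := (Fin.castSucc_lt_last i).ne
  simp [proj2, hi]

theorem flatten_add_smul_e₃ (φ : E2 → ℝ) (y : E3) : flatten φ (y + φ (proj2 y) • e₃) = y := by
  rw [flatten_eq, proj2_add_smul_e₃, add_sub_cancel_right]

theorem norm_smul_e₃ (c : ℝ) : ‖c • e₃‖ = |c| := by
  simp [norm_smul]

section Nesting

variable {φ : E2 → ℝ} {ρ r ε : ℝ}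

theorem halfBall_subset_image_flatten (hρ : ρ + ε ≤ r)
    (hφ : ∀ x : E3, ‖x‖ < ρ → |φ (proj2 x)| ≤ ε) :
    halfBall ρ ⊆ flatten φ '' {x : E3 | ‖x‖ < r ∧ x 2 > φ (proj2 x)} := by
  rintro y ⟨hy, hy₂⟩
  refine ⟨y + φ (proj2 y) • e₃, ⟨?_, ?_⟩, flatten_add_smul_e₃ φ y⟩
  · calc ‖y + φ (proj2 y) • e₃‖ ≤ ‖y‖ + |φ (proj2 y)| :=
          (norm_add_le _ _).trans_eq (by rw [norm_smul_e₃])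
      _ < r := by linarith [hφ y hy]
  · simp [proj2_add_smul_e₃, hy₂]

theorem image_flatten_subset_halfBall (hr : r + ε ≤ ρ)
    (hφ : ∀ x : E3, ‖x‖ < r → |φ (proj2 x)| ≤ ε) :
    flatten φ '' {x : E3 | ‖x‖ < r ∧ x 2 > φ (proj2 x)} ⊆ halfBall ρ := by
  rintro _ ⟨x, ⟨hx, hx₂⟩, rfl⟩
  refine ⟨?_, by rw [flatten_apply_two]; linarith⟩
  calc ‖flatten φ x‖ ≤ ‖x‖ + |φ (proj2 x)| :=
        (flatten_eq φ x ▸ norm_sub_le _ _).trans_eq (by rw [norm_smul_e₃])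
    _ < ρ := by linarith [hφ x hx]

end Nesting

/-- **Nesting of half-balls under boundary flattening** (properties (4.20)–(4.21)).
There is an absolute constant `c₀ > 0` such that: if `R > 0`, `δ ≥ 0`, `δ·R ≤ c₀`, and
`φ : ℝ² → ℝ` is `C²` with `φ(0) = 0`, `∇φ(0) = 0` and `‖D²φ‖ ≤ δ` on `{|y'| ≤ 2R}`,
then `B⁺(R) ⊆ ψ({ |x| < 3R/2, x₃ > φ(x') }) ⊆ B⁺(2R)`. -/
theorem halfBall_nesting :
    ∃ c₀ : ℝ, 0 < c₀ ∧
      ∀ R δ : ℝ, 0 < R → 0 ≤ δ → δ * R ≤ c₀ →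
        ∀ φ : E2 → ℝ, ContDiff ℝ 2 φ → φ 0 = 0 → fderiv ℝ φ 0 = 0 →
          (∀ y' : E2, ‖y'‖ ≤ 2 * R → ‖iteratedFDeriv ℝ 2 φ y'‖ ≤ δ) →
          halfBall R ⊆ flatten φ '' {x : E3 | ‖x‖ < 3 * R / 2 ∧ x 2 > φ (proj2 x)} ∧
          flatten φ '' {x : E3 | ‖x‖ < 3 * R / 2 ∧ x 2 > φ (proj2 x)} ⊆ halfBall (2 * R) := by
  refine ⟨1 / 8, by norm_num, fun R δ hR hδ hδR φ hφ hφ0 hφ' hD2 => ?_⟩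
  have hsmall : ∀ x : E3, ‖x‖ < 3 * R / 2 → |φ (proj2 x)| ≤ R / 2 := by
    intro x hx
    have hx' : proj2 x ∈ closedBall (0 : E2) (2 * R) :=
      mem_closedBall_zero_iff.mpr ((norm_proj2_le x).trans (by linarith))
    calc |φ (proj2 x)| ≤ δ * (2 * R) * (2 * R) :=
          (norm_le_of_norm_iteratedFDeriv_two_le hφ hφ0 hφ'
            (fun y hy => hD2 y (mem_closedBall_zero_iff.mp hy)) hx').trans
            (mul_le_mul_of_nonneg_left (mem_closedBall_zero_iff.mp hx') (by positivity))
      _ = 4 * (δ * R) * R := by ring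
      _ ≤ R / 2 := by nlinarith
  exact ⟨halfBall_subset_image_flatten (by linarith) fun x hx => hsmall x (by linarith),
    image_flatten_subset_halfBall (by linarith) hsmall⟩
end
end

section
/- Let f : ℝ³ → ℝ³ be Lebesgue measurable with ‖f‖_{L³ʷ(ℝ³)} < ∞. Then the following three conditions are equivalent: (a) ‖𝟙_{B(0,r)}·f‖_{L³ʷ(ℝ³)} → 0 as r → 0⁺; (b) for every ε > 0 there exists a measurable g : ℝ³ → ℝ³ with ‖g‖_{L³ʷ(ℝ³)} < ∞, with g = 0 almost everywhere on some open ball B(0,ρ) with ρ > 0, and with ‖f − g‖_{L³ʷ(ℝ³)} < ε; (c) for every ε > 0 there exists a measurable g : ℝ³ → ℝ³ with ‖g‖_{L³ʷ(ℝ³)} < ∞, with g essentially bounded on some open ball B(0,ρ) with ρ > 0, and with ‖f − g‖_{L³ʷ(ℝ³)} < ε. -/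
open MeasureTheory ENNReal Filter

noncomputable section

/-- The weak-`L³` (Lorentz `L^{3,∞}`) quasinorm of a vector field `g : ℝ³ → ℝ³` with
respect to Lebesgue measure:
`‖g‖_{L³ʷ} = sup_{t>0} t · |{x : |g(x)| > t}|^{1/3}`. -/
def weakL3 (g : E3 → E3) : ℝ≥0∞ :=
  ⨆ (t : ℝ) (_ : 0 < t),
    ENNReal.ofReal t * (volume {x : E3 | t < ‖g x‖}) ^ ((1 : ℝ) / 3)

/-- (a) The weak-`L³` norm of `f` on balls around the origin tends to `0` with the radius. -/
def smallAtOrigin (f : E3 → E3) : Prop :=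
  Tendsto (fun r : ℝ => weakL3 ((Metric.ball (0 : E3) r).indicator f))
    (nhdsWithin 0 (Set.Ioi 0)) (nhds 0)

/-- (b) `f` is approximable in weak `L³` by weak-`L³` functions vanishing a.e. in a
neighborhood of the origin. -/
def approxByVanishing (f : E3 → E3) : Prop :=
  ∀ ε : ℝ, 0 < ε → ∃ g : E3 → E3, Measurable g ∧ weakL3 g < ⊤ ∧
    (∃ ρ : ℝ, 0 < ρ ∧ ∀ᵐ x ∂volume, x ∈ Metric.ball (0 : E3) ρ → g x = 0) ∧
    weakL3 (fun x => f x - g x) < ENNReal.ofReal ε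

/-- (c) `f` is approximable in weak `L³` by weak-`L³` functions essentially bounded in a
neighborhood of the origin. -/
def approxByBounded (f : E3 → E3) : Prop :=
  ∀ ε : ℝ, 0 < ε → ∃ g : E3 → E3, Measurable g ∧ weakL3 g < ⊤ ∧
    (∃ ρ : ℝ, 0 < ρ ∧ ∃ M : ℝ, ∀ᵐ x ∂volume, x ∈ Metric.ball (0 : E3) ρ → ‖g x‖ ≤ M) ∧
    weakL3 (fun x => f x - g x) < ENNReal.ofReal ε

/-! The tail `𝟙_{B(0,r)ᶜ} f` vanishes near the origin and differs from `f` by `𝟙_{B(0,r)} f`,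
which gives (a) ⇒ (b); (b) ⇒ (c) is trivial. For (c) ⇒ (a) split
`𝟙_{B(0,r)} f = 𝟙_{B(0,r)} (f - g) + 𝟙_{B(0,r)} g`. The weak-`Lᵖ` quasinorm satisfies
`‖u + v‖ ≤ 2 (‖u‖ + ‖v‖)` for `p ≥ 1`, the first piece has quasinorm at most `‖f - g‖`, and a
function bounded by `M` on a set `s` and vanishing off it has quasinorm at most `M |s|^{1/p}`,
which tends to `0` on balls shrinking to the origin. -/

open Metric Set

section WeakLp

variable {α F : Type*} [MeasurableSpace α]

-- `weakL3 = weakLpNorm 3 volume` by `rfl`, so the lemmas below apply to `weakL3` directly.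
def weakLpNorm [Norm F] (p : ℝ) (μ : Measure α) (g : α → F) : ℝ≥0∞ :=
  ⨆ (t : ℝ) (_ : 0 < t), ENNReal.ofReal t * μ {x | t < ‖g x‖} ^ (1 / p)

variable {p : ℝ} {μ : Measure α}

lemma le_weakLpNorm [Norm F] (g : α → F) {t : ℝ} (ht : 0 < t) :
    ENNReal.ofReal t * μ {x | t < ‖g x‖} ^ (1 / p) ≤ weakLpNorm p μ g :=
  le_iSup₂ (f := fun t (_ : 0 < t) => ENNReal.ofReal t * μ {x | t < ‖g x‖} ^ (1 / p)) t ht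

lemma weakLpNorm_mono_ae [Norm F] (hp : 0 ≤ p) {u v : α → F}
    (h : ∀ᵐ x ∂μ, ‖u x‖ ≤ ‖v x‖) : weakLpNorm p μ u ≤ weakLpNorm p μ v := by
  refine iSup₂_le fun t ht => le_trans ?_ (le_weakLpNorm v ht)
  gcongr ENNReal.ofReal t * ?_
  exact ENNReal.rpow_le_rpow (measure_mono_ae (h.mono fun x hx hxt => hxt.trans_le hx))
    (by positivity)

lemma weakLpNorm_add_le [SeminormedAddGroup F] (hp : 1 ≤ p) (u v : α → F) :
    weakLpNorm p μ (fun x => u x + v x) ≤ 2 * (weakLpNorm p μ u + weakLpNorm p μ v) := by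
  refine iSup₂_le fun t ht => ?_
  have ht2 : 0 < t / 2 := half_pos ht
  have hsub : {x | t < ‖u x + v x‖} ⊆ {x | t / 2 < ‖u x‖} ∪ {x | t / 2 < ‖v x‖} := by
    intro x hx
    by_contra hc
    simp only [mem_union, mem_ofPred_eq, not_or, not_lt] at hx hc
    linarith [norm_add_le (u x) (v x)]
  have hp' : 0 ≤ 1 / p := by positivity
  have hp1 : 1 / p ≤ 1 := by rw [div_le_one (by linarith)]; exact hp
  have hofReal : ENNReal.ofReal t = 2 * ENNReal.ofReal (t / 2) := by
    rw [← ENNReal.ofReal_ofNat, ← ENNReal.ofReal_mul (by norm_num)]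
    ring_nf
  calc ENNReal.ofReal t * μ {x | t < ‖u x + v x‖} ^ (1 / p)
      ≤ ENNReal.ofReal t * (μ {x | t / 2 < ‖u x‖} + μ {x | t / 2 < ‖v x‖}) ^ (1 / p) := by
        gcongr
        exact (measure_mono hsub).trans (measure_union_le _ _)
    _ ≤ ENNReal.ofReal t * (μ {x | t / 2 < ‖u x‖} ^ (1 / p) +
          μ {x | t / 2 < ‖v x‖} ^ (1 / p)) := by
        gcongr
        exact ENNReal.rpow_add_le_add_rpow _ _ hp' hp1
    _ = 2 * (ENNReal.ofReal (t / 2) * μ {x | t / 2 < ‖u x‖} ^ (1 / p) +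
          ENNReal.ofReal (t / 2) * μ {x | t / 2 < ‖v x‖} ^ (1 / p)) := by
        rw [hofReal]; ring
    _ ≤ 2 * (weakLpNorm p μ u + weakLpNorm p μ v) := by
        gcongr <;> exact le_weakLpNorm _ ht2

lemma weakLpNorm_indicator_le_of_ae_norm_le [SeminormedAddGroup F] (hp : 0 < p)
    {g : α → F} {s : Set α} {M : ℝ} (h : ∀ᵐ x ∂μ, x ∈ s → ‖g x‖ ≤ M) :
    weakLpNorm p μ (s.indicator g) ≤ ENNReal.ofReal M * μ s ^ (1 / p) := by
  refine iSup₂_le fun t ht => ?_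
  rcases le_or_gt t M with htM | htM
  · have hsub : {x | t < ‖s.indicator g x‖} ⊆ s := fun x hx => by
      by_contra hxs
      simp only [mem_ofPred_eq, indicator_of_notMem hxs, norm_zero] at hx
      linarith
    gcongr
  · have hnull : μ {x | t < ‖s.indicator g x‖} = 0 := by
      refine measure_eq_zero_iff_ae_notMem.2 (h.mono fun x hx hxt => ?_)
      by_cases hxs : x ∈ s
      · rw [mem_ofPred_eq, indicator_of_mem hxs] at hxt
        linarith [hx hxs]
      · rw [mem_ofPred_eq, indicator_of_notMem hxs, norm_zero] at hxt
        linarith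
    rw [hnull, ENNReal.zero_rpow_of_pos (one_div_pos.2 hp), mul_zero]
    exact zero_le

lemma weakLpNorm_indicator_le_add [SeminormedAddGroup F] (hp : 1 ≤ p) {f g : α → F}
    {s : Set α} {M : ℝ} (hg : ∀ᵐ x ∂μ, x ∈ s → ‖g x‖ ≤ M) :
    weakLpNorm p μ (s.indicator f) ≤
      2 * (weakLpNorm p μ (fun x => f x - g x) + ENNReal.ofReal M * μ s ^ (1 / p)) := by
  have hsplit :
      s.indicator f = fun x => s.indicator (fun x => f x - g x) x + s.indicator g x := by
    ext x
    by_cases hx : x ∈ s <;> simp [hx]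
  rw [hsplit]
  refine (weakLpNorm_add_le hp _ _).trans ?_
  gcongr
  · exact weakLpNorm_mono_ae (by linarith) (ae_of_all _ fun x => norm_indicator_le_norm_self _ _)
  · exact weakLpNorm_indicator_le_of_ae_norm_le (by linarith) hg

end WeakLp

lemma tendsto_measure_ball_nhdsGT_zero {X : Type*} [MetricSpace X] [MeasurableSpace X]
    [OpensMeasurableSpace X] (μ : Measure X) [IsLocallyFiniteMeasure μ] [NullSingletonClass μ]
    (x : X) :
    Tendsto (fun r => μ (ball x r)) (nhdsWithin 0 (Ioi 0)) (nhds 0) := by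
  obtain ⟨r, hr, hfin⟩ := (μ.finiteAt_nhds x).exists_mem_basis nhds_basis_ball
  have := tendsto_measure_biInter_gt (μ := μ) (s := ball x) (a := 0)
    (fun r _ => measurableSet_ball.nullMeasurableSet)
    (fun _ _ _ hij => ball_subset_ball hij) ⟨r, hr, hfin.ne⟩
  rwa [biInter_gt_ball, closedBall_zero, measure_singleton] at this

theorem smallAtOrigin.approxByVanishing {f : E3 → E3} (hf : Measurable f) (hfin : weakL3 f < ⊤)
    (ha : smallAtOrigin f) : approxByVanishing f := by
  intro ε hε
  obtain ⟨r, hsmall, hr⟩ :=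
    ((ha.eventually_lt_const (ENNReal.ofReal_pos.2 hε)).and self_mem_nhdsWithin).exists
  refine ⟨(ball (0 : E3) r)ᶜ.indicator f, hf.indicator measurableSet_ball.compl,
    (weakLpNorm_mono_ae (by norm_num)
      (ae_of_all _ fun x => norm_indicator_le_norm_self _ _)).trans_lt hfin,
    ⟨r, hr, ae_of_all _ fun x hx => indicator_of_notMem (notMem_compl_iff.2 hx) f⟩, ?_⟩
  have hdiff : (fun x => f x - (ball (0 : E3) r)ᶜ.indicator f x) = (ball 0 r).indicator f := by
    funext x
    rw [indicator_compl, Pi.sub_apply]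
    abel
  rwa [hdiff]

theorem approxByVanishing.approxByBounded {f : E3 → E3} (hb : approxByVanishing f) :
    approxByBounded f := fun ε hε => by
  obtain ⟨g, hg, hgfin, ⟨ρ, hρ, hvanish⟩, hfg⟩ := hb ε hε
  exact ⟨g, hg, hgfin, ⟨ρ, hρ, 0, hvanish.mono fun x hx hxρ => by simp [hx hxρ]⟩, hfg⟩

theorem approxByBounded.smallAtOrigin {f : E3 → E3} (hc : approxByBounded f) :
    smallAtOrigin f := by
  refine ENNReal.tendsto_nhds_zero.2 fun ε hε => ?_
  obtain ⟨δ, hδ, hδε⟩ : ∃ δ : ℝ, 0 < δ ∧ 2 * ENNReal.ofReal δ < ε := by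
    obtain ⟨δ, -, hδ0, hδε⟩ := ENNReal.lt_iff_exists_real_btwn.1 (ENNReal.half_pos hε.ne')
    refine ⟨δ, ENNReal.ofReal_pos.1 hδ0, ?_⟩
    rwa [ENNReal.lt_div_iff_mul_lt (by simp) (by simp), mul_comm] at hδε
  obtain ⟨g, -, -, ⟨ρ, hρ, M, hM⟩, hfg⟩ := hc δ hδ
  have hball : Tendsto (fun r => ENNReal.ofReal M * volume (ball (0 : E3) r) ^ ((1 : ℝ) / 3))
      (nhdsWithin 0 (Ioi 0)) (nhds 0) := by
    have := (ENNReal.continuous_rpow_const (y := 1 / 3).tendsto 0).comp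
      (tendsto_measure_ball_nhdsGT_zero (volume : Measure E3) 0)
    rw [ENNReal.zero_rpow_of_pos (by norm_num : (0 : ℝ) < 1 / 3)] at this
    simpa using ENNReal.Tendsto.const_mul this (Or.inr ENNReal.ofReal_ne_top)
  have hbound := ENNReal.Tendsto.const_mul (hball.const_add (weakL3 fun x => f x - g x))
    (Or.inr (by simp : (2 : ℝ≥0∞) ≠ ⊤))
  rw [add_zero] at hbound
  filter_upwards [hbound.eventually_lt_const (lt_of_lt_of_le' hδε (by gcongr)),
    Ioo_mem_nhdsGT hρ] with r hr hrρ
  refine le_trans ?_ hr.le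
  exact weakLpNorm_indicator_le_add (by norm_num)
    (hM.mono fun x hx hxr => hx (ball_subset_ball hrρ.2.le hxr))

/-- **Characterization of the class `𝕃`.**  For a measurable `f ∈ L³ʷ(ℝ³)`, the following
are equivalent: (a) `‖𝟙_{B(0,r)} f‖_{L³ʷ} → 0` as `r → 0⁺`; (b) `f` lies in the weak-`L³`
closure of the weak-`L³` functions vanishing a.e. near the origin; (c) `f` lies in the
weak-`L³` closure of the weak-`L³` functions essentially bounded near the origin. -/
theorem L_class_characterization (f : E3 → E3) (hf : Measurable f)
    (hfin : weakL3 f < ⊤) :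
    (smallAtOrigin f ↔ approxByVanishing f) ∧
    (approxByVanishing f ↔ approxByBounded f) :=
  ⟨⟨smallAtOrigin.approxByVanishing hf hfin, fun hb => hb.approxByBounded.smallAtOrigin⟩,
    ⟨approxByVanishing.approxByBounded, fun hc => hc.smallAtOrigin.approxByVanishing hf hfin⟩⟩
end
end
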